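/- arXiv:2301.07324 — 2 statements merged into one kernel-verified Lean document; each statement's English description precedes it below -/
import Mathlib

section
/- For every real c > 0 and integer d ≥ 1, the map ŵ from the open ball {v ∈ ℝ^d : |v| < c} to ℝ^d defined by ŵ(v) = (c/√(c² − |v|²) + 1/(c² − |v|²))·v is a bijection. -/
noncomputable section

/-- The momentum map `ŵ(v) = (c/√(c² − |v|²) + 1/(c² − |v|²))·v`. -/
def what {d : ℕ} (c : ℝ) (v : EuclideanSpace ℝ (Fin d)) : EuclideanSpace ℝ (Fin d) :=
  (c / Real.sqrt (c ^ 2 - ‖v‖ ^ 2) + 1 / (c ^ 2 - ‖v‖ ^ 2)) • v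

/-- Scalar radial profile of `what`. -/
def gfun (c r : ℝ) : ℝ := (c / Real.sqrt (c ^ 2 - r ^ 2) + 1 / (c ^ 2 - r ^ 2)) * r

lemma gfun_factor_pos {c r : ℝ} (hc : 0 < c) (hr : r < c) (hr0 : 0 ≤ r) :
    0 < c / Real.sqrt (c ^ 2 - r ^ 2) + 1 / (c ^ 2 - r ^ 2) := by
  have hp : 0 < c ^ 2 - r ^ 2 := by nlinarith
  have hs : 0 < Real.sqrt (c ^ 2 - r ^ 2) := Real.sqrt_pos.mpr hp
  positivity

lemma gfun_strictMonoOn {c : ℝ} (hc : 0 < c) : StrictMonoOn (gfun c) (Set.Ico 0 c) := by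
  rintro x ⟨hx0, hxc⟩ y ⟨hy0, hyc⟩ hxy
  have px : 0 < c ^ 2 - x ^ 2 := by nlinarith
  have py : 0 < c ^ 2 - y ^ 2 := by nlinarith
  have hsx : 0 < Real.sqrt (c ^ 2 - x ^ 2) := Real.sqrt_pos.mpr px
  have hsy : 0 < Real.sqrt (c ^ 2 - y ^ 2) := Real.sqrt_pos.mpr py
  have hsyx : Real.sqrt (c ^ 2 - y ^ 2) ≤ Real.sqrt (c ^ 2 - x ^ 2) :=
    Real.sqrt_le_sqrt (by nlinarith)
  have h1 : c / Real.sqrt (c ^ 2 - x ^ 2) * x < c / Real.sqrt (c ^ 2 - y ^ 2) * y := by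
    rw [div_mul_eq_mul_div, div_mul_eq_mul_div]
    exact div_lt_div₀ (by nlinarith) hsyx (by positivity) hsy
  have h2 : 1 / (c ^ 2 - x ^ 2) * x < 1 / (c ^ 2 - y ^ 2) * y := by
    rw [one_div_mul_eq_div, one_div_mul_eq_div, div_lt_div_iff₀ px py]
    nlinarith [mul_pos (sub_pos.mpr hxy) (show (0:ℝ) < c ^ 2 + x * y by nlinarith)]
  unfold gfun
  rw [add_mul, add_mul]
  exact add_lt_add h1 h2

lemma gfun_continuousOn {c b : ℝ} (hc : 0 < c) (hb0 : 0 ≤ b) (hbc : b < c) :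
    ContinuousOn (gfun c) (Set.Icc 0 b) := by
  have key : ∀ r ∈ Set.Icc (0:ℝ) b, 0 < c ^ 2 - r ^ 2 := by
    rintro r ⟨h1, h2⟩; nlinarith
  apply ContinuousOn.mul _ continuousOn_id
  apply ContinuousOn.add
  · apply ContinuousOn.div continuousOn_const
    · exact (Real.continuous_sqrt.comp (by continuity)).continuousOn
    · intro r hr
      exact (Real.sqrt_pos.mpr (key r hr)).ne'
  · apply ContinuousOn.div continuousOn_const
      ((continuous_const.sub (continuous_pow 2)).continuousOn)
    intro r hr
    exact (key r hr).ne'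

lemma norm_what {d : ℕ} {c : ℝ} (hc : 0 < c) (v : EuclideanSpace ℝ (Fin d))
    (hv : ‖v‖ < c) : ‖what c v‖ = gfun c ‖v‖ := by
  have h := gfun_factor_pos hc hv (norm_nonneg v)
  rw [what, norm_smul, Real.norm_eq_abs, abs_of_pos h, gfun]

/-- surjectivity of the scalar profile -/
lemma gfun_surj {c : ℝ} (hc : 0 < c) {s : ℝ} (hs : 0 < s) :
    ∃ r, 0 ≤ r ∧ r < c ∧ gfun c r = s := by
  set ε : ℝ := min (c / 2) (1 / (4 * s)) with hε
  have hε0 : 0 < ε := lt_min (by linarith) (by positivity)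
  have hε1 : ε ≤ c / 2 := min_le_left _ _
  have hε2 : ε ≤ 1 / (4 * s) := min_le_right _ _
  have hε2' : 4 * s * ε ≤ 1 := by
    rw [le_div_iff₀ (by positivity)] at hε2; linarith [hε2]
  set b : ℝ := c - ε with hbdef
  have hb0 : 0 ≤ b := by simp only [hbdef]; linarith
  have hbc : b < c := by simp only [hbdef]; linarith
  have pb : 0 < c ^ 2 - b ^ 2 := by nlinarith
  have hsb : 0 ≤ c / Real.sqrt (c ^ 2 - b ^ 2) := by positivity
  have hbig : s ≤ gfun c b := by
    have h1 : s * (c ^ 2 - b ^ 2) ≤ b := by nlinarith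
    have h2 : s ≤ b / (c ^ 2 - b ^ 2) := (le_div_iff₀ pb).mpr h1
    have h3 : b / (c ^ 2 - b ^ 2) ≤ gfun c b := by
      unfold gfun
      rw [add_mul, one_div_mul_eq_div]
      nlinarith [mul_nonneg hsb hb0]
    linarith
  have hIVT := intermediate_value_Icc hb0 (gfun_continuousOn hc hb0 hbc)
  have hg0 : gfun c 0 = 0 := by simp [gfun]
  have hmem : s ∈ Set.Icc (gfun c 0) (gfun c b) := by
    rw [hg0]; exact ⟨hs.le, hbig⟩
  obtain ⟨r, ⟨hr0, hrb⟩, hr⟩ := hIVT hmem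
  exact ⟨r, hr0, lt_of_le_of_lt hrb hbc, hr⟩

/-- For every `c > 0` and `d ≥ 1`, the map `ŵ` is a bijection from the open ball
`{v ∈ ℝ^d : |v| < c}` onto `ℝ^d`. -/
theorem what_bijOn (c : ℝ) (hc : 0 < c) (d : ℕ) (hd : 1 ≤ d) :
    Set.BijOn (what c) {v : EuclideanSpace ℝ (Fin d) | ‖v‖ < c} Set.univ := by
  refine ⟨fun v _ => Set.mem_univ _, ?_, ?_⟩
  · -- injectivity
    intro v hv w hw h
    simp only [Set.mem_setOf_eq] at hv hw
    have hnorm : gfun c ‖v‖ = gfun c ‖w‖ := by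
      rw [← norm_what hc v hv, ← norm_what hc w hw, h]
    have hvw : ‖v‖ = ‖w‖ :=
      (gfun_strictMonoOn hc).injOn ⟨norm_nonneg v, hv⟩ ⟨norm_nonneg w, hw⟩ hnorm
    have hk := gfun_factor_pos hc hv (norm_nonneg v)
    rw [what, what, ← hvw] at h
    exact smul_right_injective _ hk.ne' h
  · -- surjectivity
    rintro u -
    by_cases hu : u = 0
    · refine ⟨0, ?_, ?_⟩
      · simp [Set.mem_setOf_eq, hc]
      · simp [what, hu]
    · have hu0 : 0 < ‖u‖ := norm_pos_iff.mpr hu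
      obtain ⟨r, hr0, hrc, hgr⟩ := gfun_surj hc hu0
      refine ⟨(r / ‖u‖) • u, ?_, ?_⟩
      · simp only [Set.mem_setOf_eq, norm_smul, Real.norm_eq_abs,
          abs_of_nonneg (by positivity : (0:ℝ) ≤ r / ‖u‖)]
        rw [div_mul_cancel₀ _ hu0.ne']
        exact hrc
      · have hnv : ‖(r / ‖u‖) • u‖ = r := by
          rw [norm_smul, Real.norm_eq_abs, abs_of_nonneg (by positivity : (0:ℝ) ≤ r / ‖u‖),
            div_mul_cancel₀ _ hu0.ne']
        rw [what, hnv, smul_smul]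
        have : (c / Real.sqrt (c ^ 2 - r ^ 2) + 1 / (c ^ 2 - r ^ 2)) * (r / ‖u‖) = 1 := by
          rw [← mul_div_assoc]
          rw [div_eq_one_iff_eq hu0.ne']
          exact hgr
        rw [this, one_smul]

end
end

section
/- For every c > 0, the function f : [0, c) → ℝ defined by f(x) = c²·(c/√(c² − x²) − 1) + c²/(c² − x²) − log(c/√(c² − x²)) is strictly increasing, satisfies f(0) = 1and f(x) → ∞ as x → c⁻, and is a bijection from [0, c) onto [1, ∞). -/
open scoped Topology

noncomputable section

/-- Relativistic mechanical energy of a single particle as a function of its speed: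
with `Γ = c/√(c² − x²)`, `f(x) = c²(Γ − 1) + Γ² − log Γ`. -/
def energyOfSpeed (c : ℝ) (x : ℝ) : ℝ :=
  c ^ 2 * (c / Real.sqrt (c ^ 2 - x ^ 2) - 1) + c ^ 2 / (c ^ 2 - x ^ 2)
    - Real.log (c / Real.sqrt (c ^ 2 - x ^ 2))

/-- For every `c > 0`, the single-particle energy `f` is strictly increasing on `[0, c)`,
satisfies `f(0) = 1`, tends to `∞` as `x → c⁻`, and is a bijection from `[0, c)` onto
`[1, ∞)`. -/
theorem energyOfSpeed_strictMono_bijOn (c : ℝ) (hc : 0 < c) :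
    StrictMonoOn (energyOfSpeed c) (Set.Ico 0 c) ∧
    energyOfSpeed c 0 = 1 ∧
    Filter.Tendsto (energyOfSpeed c) (𝓝[<] c) Filter.atTop ∧
    Set.BijOn (energyOfSpeed c) (Set.Ico 0 c) (Set.Ici 1) := by
  set γ : ℝ → ℝ := fun x => c / Real.sqrt (c ^ 2 - x ^ 2) with hγdef
  have key : ∀ x ∈ Set.Ico (0:ℝ) c, 0 < c ^ 2 - x ^ 2 := by
    rintro x ⟨hx0, hxc⟩; nlinarith
  have hsqrtpos : ∀ x ∈ Set.Ico (0:ℝ) c, 0 < Real.sqrt (c ^ 2 - x ^ 2) :=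
    fun x hx => Real.sqrt_pos.2 (key x hx)
  have hγpos : ∀ x ∈ Set.Ico (0:ℝ) c, 0 < γ x :=
    fun x hx => div_pos hc (hsqrtpos x hx)
  have hγ1 : ∀ x ∈ Set.Ico (0:ℝ) c, 1 ≤ γ x := by
    intro x hx
    rw [hγdef, le_div_iff₀ (hsqrtpos x hx), one_mul]
    calc Real.sqrt (c ^ 2 - x ^ 2) ≤ Real.sqrt (c ^ 2) := by
          apply Real.sqrt_le_sqrt; nlinarith [hx.1]
      _ = c := Real.sqrt_sq hc.le
  have hsq : ∀ x ∈ Set.Ico (0:ℝ) c, γ x ^ 2 = c ^ 2 / (c ^ 2 - x ^ 2) := by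
    intro x hx
    rw [hγdef, div_pow, Real.sq_sqrt (key x hx).le]
  have hf : ∀ x ∈ Set.Ico (0:ℝ) c,
      energyOfSpeed c x = c ^ 2 * (γ x - 1) + γ x ^ 2 - Real.log (γ x) := by
    intro x hx
    rw [energyOfSpeed, hsq x hx]
  -- lower bound: f x ≥ γ x
  have hlb : ∀ x ∈ Set.Ico (0:ℝ) c, γ x ≤ energyOfSpeed c x := by
    intro x hx
    rw [hf x hx]
    have hlog : Real.log (γ x) ≤ γ x - 1 := Real.log_le_sub_one_of_pos (hγpos x hx)
    have h1 := hγ1 x hx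
    nlinarith [sq_nonneg (γ x - 1), sq_nonneg c]
  -- strict monotonicity of γ
  have hγmono : ∀ a ∈ Set.Ico (0:ℝ) c, ∀ b ∈ Set.Ico (0:ℝ) c, a < b → γ a < γ b := by
    intro a ha b hb hab
    have h1 : Real.sqrt (c ^ 2 - b ^ 2) < Real.sqrt (c ^ 2 - a ^ 2) := by
      apply Real.sqrt_lt_sqrt (key b hb).le
      nlinarith [ha.1]
    exact div_lt_div_of_pos_left hc (hsqrtpos b hb) h1
  -- strict monotonicity of f
  have hmono : StrictMonoOn (energyOfSpeed c) (Set.Ico 0 c) := by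
    intro a ha b hb hab
    rw [hf a ha, hf b hb]
    have hga := hγ1 a ha
    have hgb := hγ1 b hb
    have hgab := hγmono a ha b hb hab
    have hlog : Real.log (γ b) - Real.log (γ a) ≤ γ b - γ a := by
      have h1 : Real.log (γ b / γ a) ≤ γ b / γ a - 1 :=
        Real.log_le_sub_one_of_pos (div_pos (hγpos b hb) (hγpos a ha))
      rw [Real.log_div (hγpos b hb).ne' (hγpos a ha).ne'] at h1
      have h2 : γ b / γ a - 1 = (γ b - γ a) / γ a := by
        field_simp
      have h3 : (γ b - γ a) / γ a ≤ γ b - γ a :=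
        div_le_self (by linarith) hga
      linarith
    nlinarith [sq_nonneg c]
  -- value at 0
  have h0 : energyOfSpeed c 0 = 1 := by
    simp [energyOfSpeed, Real.sqrt_sq hc.le, div_self hc.ne',
      div_self (pow_ne_zero 2 hc.ne')]
  -- γ tends to atTop
  have hγtop : Filter.Tendsto γ (𝓝[<] c) Filter.atTop := by
    have h1 : Filter.Tendsto (fun x : ℝ => c ^ 2 - x ^ 2) (𝓝[<] c) (𝓝[>] 0) := by
      apply tendsto_nhdsWithin_of_tendsto_nhds_of_eventually_within
      · have : Filter.Tendsto (fun x : ℝ => c ^ 2 - x ^ 2) (𝓝 c) (𝓝 (c ^ 2 - c ^ 2)) :=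
          (tendsto_const_nhds.sub ((continuous_pow 2).tendsto c))
        simpa using this.mono_left nhdsWithin_le_nhds
      · filter_upwards [Ioo_mem_nhdsLT_of_mem (Set.mem_Ioc.2 ⟨neg_lt_self hc, le_refl c⟩)]
          with x hx
        have : -c < x := hx.1
        have : x < c := hx.2
        show (0:ℝ) < c ^ 2 - x ^ 2
        nlinarith
    have h2 : Filter.Tendsto (fun x : ℝ => Real.sqrt (c ^ 2 - x ^ 2)) (𝓝[<] c) (𝓝[>] 0) := by
      apply tendsto_nhdsWithin_of_tendsto_nhds_of_eventually_within
      · have hs : Filter.Tendsto Real.sqrt (𝓝 0) (𝓝 0) := by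
          simpa using Real.continuous_sqrt.tendsto 0
        exact hs.comp (h1.mono_right nhdsWithin_le_nhds)
      · filter_upwards [h1 self_mem_nhdsWithin] with x hx
        exact Real.sqrt_pos.2 hx
    have h3 : Filter.Tendsto (fun x : ℝ => (Real.sqrt (c ^ 2 - x ^ 2))⁻¹) (𝓝[<] c)
        Filter.atTop := tendsto_inv_nhdsGT_zero.comp h2
    have h4 := h3.const_mul_atTop hc
    refine h4.congr fun x => ?_
    simp [hγdef, div_eq_mul_inv]
  -- f tends to atTop
  have htop : Filter.Tendsto (energyOfSpeed c) (𝓝[<] c) Filter.atTop := by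
    apply Filter.tendsto_atTop_mono' _ _ hγtop
    filter_upwards [Ioo_mem_nhdsLT_of_mem (Set.mem_Ioc.2 ⟨hc, le_refl c⟩)] with x hx
    exact hlb x ⟨hx.1.le, hx.2⟩
  -- continuity on Ico 0 c
  have hcont : ContinuousOn (energyOfSpeed c) (Set.Ico 0 c) := by
    intro x hx
    have h1 := key x hx
    have hsx : Real.sqrt (c ^ 2 - x ^ 2) ≠ 0 := (hsqrtpos x hx).ne'
    have hA : ContinuousAt (fun x : ℝ => c / Real.sqrt (c ^ 2 - x ^ 2)) x :=
      continuousAt_const.div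
        ((Real.continuous_sqrt.comp (continuous_const.sub (continuous_pow 2))).continuousAt)
        hsx
    have hB : ContinuousAt (fun x : ℝ => c ^ 2 / (c ^ 2 - x ^ 2)) x :=
      continuousAt_const.div ((continuous_const.sub (continuous_pow 2)).continuousAt) h1.ne'
    have hC : ContinuousAt (fun x : ℝ => Real.log (c / Real.sqrt (c ^ 2 - x ^ 2))) x :=
      (Real.continuousAt_log (hγpos x hx).ne').comp hA
    exact (((continuousAt_const.mul (hA.sub continuousAt_const)).add hB).sub hC).continuousWithinAt
  refine ⟨hmono, h0, htop, ?_, hmono.injOn, ?_⟩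
  · -- MapsTo
    intro x hx
    exact le_trans (hγ1 x hx) (hlb x hx)
  · -- SurjOn
    intro y hy
    have hev : ∀ᶠ x in 𝓝[<] c, y < energyOfSpeed c x := htop.eventually_gt_atTop y
    have hmem : Set.Ioo 0 c ∈ 𝓝[<] c :=
      Ioo_mem_nhdsLT_of_mem (Set.mem_Ioc.2 ⟨hc, le_refl c⟩)
    obtain ⟨b, hby, hb⟩ := (hev.and (Filter.eventually_of_mem hmem fun _ h => h)).exists
    have hsub : Set.Icc (0:ℝ) b ⊆ Set.Ico 0 c := fun z hz => ⟨hz.1, lt_of_le_of_lt hz.2 hb.2⟩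
    have hivt := intermediate_value_Icc hb.1.le (hcont.mono hsub)
    have hy2 : y ∈ Set.Icc (energyOfSpeed c 0) (energyOfSpeed c b) := ⟨h0 ▸ hy, hby.le⟩
    obtain ⟨z, hz, hzy⟩ := hivt hy2
    exact ⟨z, hsub hz, hzy⟩
end
end
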